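/- Let T=(V,E) be a tree and t ≥ 2 an integer. For any w = z^{j-1} x x_{j+1} ⋯ x_t and w' = z^{j-1} y y_{j+1} ⋯ y_t in V^t, where 1 ≤ j ≤ t−1, x, y, z ∈ V and x ≠ y, we have d_{S(T,t)}(w, w') = d_{S(T,t-j)}( (x')^{t-j}, x_{j+1}⋯x_t ) + d_{S(T,t-j)}( (y')^{t-j}, y_{j+1}⋯y_t ) + (2^{t-j+1} − 1)·d_T(x,y) − 2(2^{t-j} − 1), where x' and y' are the neighbors of x and y, respectively, lying on the (unique) path in T between x and y. -/

import Mathlib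

/-- The generalized Sierpiński graph `S(G,t)` of a base graph `G`: vertices are words of
length `t` over the vertex set (encoded as `Fin t → V`); two words are adjacent iff they are
of the form `w x y^{d-1}` and `w y x^{d-1}` for some edge `{x,y}` of `G`. -/
def SierpinskiGraph {V : Type*} (G : SimpleGraph V) (t : ℕ) : SimpleGraph (Fin t → V) where
  Adj u v := ∃ i : Fin t, G.Adj (u i) (v i) ∧
      (∀ j : Fin t, j < i → u j = v j) ∧
      (∀ j : Fin t, i < j → u j = v i ∧ v j = u i)
  symm := by
    refine ⟨?_⟩
    rintro u v ⟨i, h1, h2, h3⟩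
    exact ⟨i, h1.symm, fun j hj => (h2 j hj).symm, fun j hj => ⟨(h3 j hj).2, (h3 j hj).1⟩⟩
  loopless := by
    refine ⟨?_⟩
    rintro u ⟨i, h1, -, -⟩
    exact G.loopless.irrefl _ h1

/-!
In `S(T, t + 1)` a word is a letter `a` followed by a word of `S(T, t)`; the edges are those
of the copies `a S(T, t)` together with one edge `a b^t — b a^t` for each edge `ab` of `T`.
For a tree this gives the recursion `distFormula`: `d(a u, a w) = d(u, w)`, and for `a ≠ c`,
with `a'`, `c'` the neighbours of `a`, `c` on the `a`–`c` path,
`d(a u, c w) = d(a'^t, u) + d(c'^t, w) + (2^(t+1) - 1) (d_T(a, c) - 1) + 1`: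
a shortest walk leaves the copy of `a` through `a a'^t`, and crosses the copy of each inner vertex
`v` of the path between its extreme vertices `v v₋^t` and `v v₊^t` at cost `2 (2^t - 1) + 1`.
The recursion is proved for all `t` at once, together with `d(a^t, b^t) = (2^t - 1) d_T(a, b)`:
the formula vanishes at the target, changes by at most one along an edge, and drops by one along
some edge out of every other vertex, so it is the distance. The theorem is the case `a = x`,
`c = y` once the common prefix `z^(j-1)` is stripped.
-/

lemma two_pow_succ_sub_one_mul_succ (t k : ℕ) :
    (2 ^ (t + 1) - 1) * (k + 1) = (2 ^ (t + 1) - 1) * k + (2 ^ t - 1) * 2 + 1 := by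
  have := Nat.one_le_two_pow (n := t)
  rw [pow_succ, mul_add_one]
  omega

namespace SimpleGraph

variable {V : Type*} {G : SimpleGraph V} {u v w : V}

lemma dist_le_dist_add_one_of_adj (h : G.Adj v w) : G.dist u v ≤ G.dist u w + 1 := by
  have := h.symm.diff_dist_adj (u := u)
  omega

lemma Walk.dist_snd_add_one {p : G.Walk u v} (hp : p.length = G.dist u v) (hnil : ¬p.Nil) :
    G.dist p.snd v + 1 = G.dist u v := by
  have h₁ : G.dist p.snd v ≤ p.tail.length := dist_le _
  have h₂ := p.length_tail_add_one hnil
  have h₃ : G.dist v u ≤ G.dist v p.snd + 1 := dist_le_dist_add_one_of_adj (p.adj_snd hnil)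
  rw [dist_comm (u := v), dist_comm (u := v)] at h₃
  omega

lemma Reachable.exists_adj_dist_add_one (h : G.Reachable u v) (hne : u ≠ v) :
    ∃ u', G.Adj u u' ∧ G.dist u' v + 1 = G.dist u v := by
  obtain ⟨p, hp⟩ := h.exists_walk_length_eq_dist
  have hnil := Walk.not_nil_of_ne (p := p) hne
  exact ⟨p.snd, p.adj_snd hnil, p.dist_snd_add_one hp hnil⟩

lemma le_add_length_of_forall_adj_le (f : V → ℕ) (hf : ∀ p q, G.Adj p q → f p ≤ f q + 1)
    (W : G.Walk u v) : f u ≤ f v + W.length := by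
  induction W with
  | nil => simp
  | cons h _ ih =>
    have := hf _ _ h
    rw [Walk.length_cons]
    omega

lemma exists_walk_length_le_of_forall_exists_adj_lt (f : V → ℕ)
    (hf : ∀ p, p ≠ v → ∃ q, G.Adj p q ∧ f q < f p) (u : V) :
    ∃ W : G.Walk u v, W.length ≤ f u := by
  induction hn : f u using Nat.strong_induction_on generalizing u with
  | _ n ih =>
    by_cases huv : u = v
    · subst huv
      exact ⟨.nil, Nat.zero_le _⟩
    obtain ⟨q, hq, hlt⟩ := hf u huv
    obtain ⟨W, hW⟩ := ih (f q) (hn ▸ hlt) q rfl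
    exact ⟨.cons hq W, by rw [Walk.length_cons]; omega⟩

theorem reachable_and_dist_eq_of_potential (f : V → ℕ) (hv : f v = 0)
    (hlip : ∀ p q, G.Adj p q → f p ≤ f q + 1)
    (hdesc : ∀ p, p ≠ v → ∃ q, G.Adj p q ∧ f q < f p) (u : V) :
    G.Reachable u v ∧ G.dist u v = f u := by
  obtain ⟨W, hW⟩ := exists_walk_length_le_of_forall_exists_adj_lt f hdesc u
  obtain ⟨W', hW'⟩ := W.reachable.exists_walk_length_eq_dist
  have := le_add_length_of_forall_adj_le f hlip W'
  have := dist_le W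
  exact ⟨W.reachable, by omega⟩

namespace IsTree

variable (hT : G.IsTree)

noncomputable def towards (a b : V) : V := (hT.existsUnique_path a b).exists.choose.snd

variable {hT} {a b c : V}

lemma snd_eq_towards {q : G.Walk a b} (hq : q.IsPath) : q.snd = hT.towards a b :=
  congrArg Walk.snd <|
    (hT.existsUnique_path a b).unique hq (hT.existsUnique_path a b).exists.choose_spec

lemma adj_towards_and_dist_towards_add_one (hab : a ≠ b) :
    G.Adj a (hT.towards a b) ∧ G.dist (hT.towards a b) b + 1 = G.dist a b := by
  obtain ⟨p, hp, hlen⟩ := hT.connected.exists_path_of_dist a b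
  have hnil := Walk.not_nil_of_ne (p := p) hab
  rw [← snd_eq_towards hp]
  exact ⟨p.adj_snd hnil, p.dist_snd_add_one hlen hnil⟩

lemma eq_towards (hac : G.Adj a c) (hd : G.dist c b + 1 = G.dist a b) : c = hT.towards a b := by
  obtain ⟨p, -, hlen⟩ := hT.connected.exists_path_of_dist c b
  have hW : (Walk.cons hac p).IsPath :=
    Walk.isPath_of_length_eq_dist _ (by rw [Walk.length_cons, hlen, hd])
  simpa using snd_eq_towards hW

lemma towards_eq_of_adj (hab : G.Adj a b) : hT.towards a b = b :=
  (eq_towards hab (by rw [dist_self, dist_eq_one_iff_adj.mpr hab])).symm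

lemma towards_eq_towards_of_adj (hab : G.Adj a b) (hd : G.dist a c = G.dist b c + 1)
    (hbc : b ≠ c) : hT.towards c a = hT.towards c b := by
  obtain ⟨hf, hfd⟩ := adj_towards_and_dist_towards_add_one (hT := hT) hbc.symm
  refine (eq_towards hf ?_).symm
  have h₁ : G.dist (hT.towards c b) a ≤ G.dist (hT.towards c b) b + 1 :=
    dist_le_dist_add_one_of_adj hab
  have h₂ : G.dist a c ≤ G.dist a (hT.towards c b) + 1 := dist_le_dist_add_one_of_adj hf
  have e₁ : G.dist c a = G.dist a c := dist_comm
  have e₂ : G.dist c b = G.dist b c := dist_comm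
  have e₃ : G.dist a (hT.towards c b) = G.dist (hT.towards c b) a := dist_comm
  omega

lemma dist_towards_eq_two (hab : G.Adj a b) (hd : G.dist a c = G.dist b c + 1) (hbc : b ≠ c) :
    G.dist (hT.towards b c) a = 2 := by
  obtain ⟨hg, hgd⟩ := adj_towards_and_dist_towards_add_one (hT := hT) hbc
  rw [dist_comm]
  have h₁ : G.dist a (hT.towards b c) ≤ G.dist a b + 1 := dist_le_dist_add_one_of_adj hg.symm
  have h₂ : G.dist a c ≤ G.dist a (hT.towards b c) + G.dist (hT.towards b c) c :=
    hT.connected.dist_triangle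
  have h₃ : G.dist a b = 1 := dist_eq_one_iff_adj.mpr hab
  omega

end IsTree

end SimpleGraph

namespace SierpinskiGraph

open SimpleGraph

variable {V : Type*} {T : SimpleGraph V} {t : ℕ}

lemma adj_cons_cons_iff {a b : V} {u v : Fin t → V} :
    (SierpinskiGraph T (t + 1)).Adj (Fin.cons a u) (Fin.cons b v) ↔
      (a = b ∧ (SierpinskiGraph T t).Adj u v) ∨
        (T.Adj a b ∧ u = (fun _ => b) ∧ v = (fun _ => a)) := by
  constructor
  · rintro ⟨i, hadj, hlt, hgt⟩
    cases i using Fin.cases with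
    | zero =>
      have hgt' (j : Fin t) : u j = b ∧ v j = a := by simpa using hgt j.succ (Fin.succ_pos j)
      exact Or.inr ⟨by simpa using hadj, funext fun j => (hgt' j).1, funext fun j => (hgt' j).2⟩
    | succ i =>
      refine Or.inl ⟨by simpa using hlt 0 (Fin.succ_pos i), i, by simpa using hadj,
        fun j hj => ?_, fun j hj => ?_⟩
      · simpa using hlt j.succ (Fin.succ_lt_succ_iff.mpr hj)
      · simpa using hgt j.succ (Fin.succ_lt_succ_iff.mpr hj)
  · rintro (⟨rfl, i, hadj, hlt, hgt⟩ | ⟨hadj, rfl, rfl⟩)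
    · refine ⟨i.succ, by simpa using hadj, fun j hj => ?_, fun j hj => ?_⟩
      · cases j using Fin.cases with
        | zero => rfl
        | succ j => simpa using hlt j (Fin.succ_lt_succ_iff.mp hj)
      · cases j using Fin.cases with
        | zero => exact absurd hj (Fin.not_lt_zero _)
        | succ j => simpa using hgt j (Fin.succ_lt_succ_iff.mp hj)
    · refine ⟨0, by simpa using hadj, fun j hj => absurd hj (Fin.not_lt_zero _),
        fun j hj => ?_⟩
      cases j using Fin.cases with
      | zero => exact absurd hj (lt_irrefl _)
      | succ j => simp

variable (hT : T.IsTree)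

open Classical in
noncomputable def distFormula (t : ℕ) (a : V) (u : Fin t → V) (c : V) (w : Fin t → V) : ℕ :=
  if a = c then (SierpinskiGraph T t).dist u w
  else (SierpinskiGraph T t).dist (fun _ => hT.towards a c) u +
    (SierpinskiGraph T t).dist (fun _ => hT.towards c a) w +
    (2 ^ (t + 1) - 1) * (T.dist a c - 1) + 1

variable {hT} {a b c : V} {u v w : Fin t → V}

lemma distFormula_same : distFormula hT t a u a w = (SierpinskiGraph T t).dist u w :=
  if_pos rfl

lemma distFormula_of_ne (hac : a ≠ c) :
    distFormula hT t a u c w = (SierpinskiGraph T t).dist (fun _ => hT.towards a c) u +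
      (SierpinskiGraph T t).dist (fun _ => hT.towards c a) w +
      (2 ^ (t + 1) - 1) * (T.dist a c - 1) + 1 := by
  rw [distFormula, if_neg hac]

lemma distFormula_le_of_adj (h : (SierpinskiGraph T t).Adj u v) :
    distFormula hT t a u c w ≤ distFormula hT t a v c w + 1 := by
  unfold distFormula
  split_ifs
  · rw [dist_comm, dist_comm (u := v)]
    exact dist_le_dist_add_one_of_adj h
  · have := dist_le_dist_add_one_of_adj h (u := fun _ => hT.towards a c)
    omega

lemma distFormula_cross
    (hE : ∀ a b : V,
      (SierpinskiGraph T t).dist (fun _ => a) (fun _ => b) = (2 ^ t - 1) * T.dist a b)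
    (hab : T.Adj a b) (hd : T.dist a c = T.dist b c + 1) :
    distFormula hT t a (fun _ => b) c w = distFormula hT t b (fun _ => a) c w + 1 := by
  have hac : a ≠ c := by
    rintro rfl
    rw [dist_self] at hd
    omega
  rw [distFormula_of_ne hac, ← IsTree.eq_towards hab hd.symm, dist_self, zero_add, hd]
  by_cases hbc : b = c
  · subst hbc
    rw [distFormula_same, IsTree.towards_eq_of_adj hab.symm, dist_self, dist_comm]
    simp
  · obtain ⟨k, hk⟩ : ∃ k, T.dist b c = k + 1 :=
      Nat.exists_eq_add_one.mpr (hT.connected.pos_dist_of_ne hbc)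
    rw [distFormula_of_ne hbc, IsTree.towards_eq_towards_of_adj hab hd hbc, hE,
      IsTree.dist_towards_eq_two hab hd hbc, hk, Nat.add_sub_cancel, Nat.add_sub_cancel,
      two_pow_succ_sub_one_mul_succ]
    omega

lemma reachable_and_dist_cons_cons (hP : (SierpinskiGraph T t).Preconnected)
    (hE : ∀ a b : V,
      (SierpinskiGraph T t).dist (fun _ => a) (fun _ => b) = (2 ^ t - 1) * T.dist a b)
    (a : V) (u : Fin t → V) (c : V) (w : Fin t → V) :
    (SierpinskiGraph T (t + 1)).Reachable (Fin.cons a u) (Fin.cons c w) ∧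
      (SierpinskiGraph T (t + 1)).dist (Fin.cons a u) (Fin.cons c w) =
        distFormula hT t a u c w := by
  refine reachable_and_dist_eq_of_potential
    (fun p : Fin (t + 1) → V => distFormula hT t (p 0) (Fin.tail p) c w)
    (by simp [distFormula_same]) (fun p q => ?_) (fun p => ?_) (Fin.cons a u)
  · induction p using Fin.consCases with | cons a u => ?_
    induction q using Fin.consCases with | cons b v => ?_
    intro h
    simp only [Fin.cons_zero, Fin.tail_cons]
    rcases adj_cons_cons_iff.mp h with ⟨rfl, huv⟩ | ⟨hab, rfl, rfl⟩
    · exact distFormula_le_of_adj huv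
    have hd := hT.dist_eq_dist_add_one_of_adj c hab
    rw [dist_comm (u := c), dist_comm (u := c)] at hd
    rcases hd with hd | hd
    · rw [distFormula_cross hE hab hd]
    · rw [distFormula_cross hE hab.symm hd]
      omega
  · induction p using Fin.consCases with | cons a u => ?_
    intro hne
    simp only [Fin.cons_zero, Fin.tail_cons]
    by_cases hac : a = c
    · subst hac
      obtain ⟨u', hu', hd⟩ := (hP u w).exists_adj_dist_add_one (fun h => hne (h ▸ rfl))
      refine ⟨Fin.cons a u', adj_cons_cons_iff.mpr (Or.inl ⟨rfl, hu'⟩), ?_⟩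
      simp only [Fin.cons_zero, Fin.tail_cons, distFormula_same]
      omega
    obtain ⟨hadj, hd⟩ := IsTree.adj_towards_and_dist_towards_add_one (hT := hT) hac
    by_cases hu : u = fun _ => hT.towards a c
    · subst hu
      refine ⟨Fin.cons (hT.towards a c) (fun _ => a),
        adj_cons_cons_iff.mpr (Or.inr ⟨hadj, rfl, rfl⟩), ?_⟩
      simp only [Fin.cons_zero, Fin.tail_cons, distFormula_cross hE hadj hd.symm]
      omega
    obtain ⟨u', hu', hd'⟩ := (hP u _).exists_adj_dist_add_one hu
    refine ⟨Fin.cons a u', adj_cons_cons_iff.mpr (Or.inl ⟨rfl, hu'⟩), ?_⟩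
    simp only [Fin.cons_zero, Fin.tail_cons, distFormula_of_ne hac]
    rw [dist_comm (u := u), dist_comm (u := u')] at hd'
    omega

theorem preconnected_and_dist_const (hT : T.IsTree) (t : ℕ) :
    (SierpinskiGraph T t).Preconnected ∧
      ∀ a b : V,
        (SierpinskiGraph T t).dist (fun _ => a) (fun _ => b) = (2 ^ t - 1) * T.dist a b := by
  induction t with
  | zero =>
    refine ⟨fun u v => by rw [Subsingleton.elim u v], fun a b => ?_⟩
    simp [Subsingleton.elim (fun _ : Fin 0 => a) (fun _ => b)]
  | succ t ih =>
    have H := reachable_and_dist_cons_cons (hT := hT) ih.1 ih.2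
    refine ⟨fun p r => ?_, fun a b => ?_⟩
    · induction p using Fin.consCases
      induction r using Fin.consCases
      exact (H _ _ _ _).1
    have hconst (a : V) : (fun _ : Fin (t + 1) => a) = Fin.cons a (fun _ => a) :=
      (Fin.cons_self_tail _).symm
    rw [hconst a, hconst b, (H _ _ _ _).2]
    by_cases hab : a = b
    · subst hab
      simp [distFormula_same]
    obtain ⟨k, hk⟩ : ∃ k, T.dist a b = k + 1 :=
      Nat.exists_eq_add_one.mpr (hT.connected.pos_dist_of_ne hab)
    have hta := (IsTree.adj_towards_and_dist_towards_add_one (hT := hT) hab).1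
    have htb := (IsTree.adj_towards_and_dist_towards_add_one (hT := hT) (Ne.symm hab)).1
    rw [distFormula_of_ne hab, ih.2, ih.2, dist_comm (u := hT.towards a b),
      dist_comm (u := hT.towards b a), dist_eq_one_iff_adj.mpr hta,
      dist_eq_one_iff_adj.mpr htb, hk, Nat.add_sub_cancel, two_pow_succ_sub_one_mul_succ]
    omega

theorem dist_cons_cons (hT : T.IsTree) (a : V) (u : Fin t → V) (c : V) (w : Fin t → V) :
    (SierpinskiGraph T (t + 1)).dist (Fin.cons a u) (Fin.cons c w) = distFormula hT t a u c w :=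
  (reachable_and_dist_cons_cons (preconnected_and_dist_const hT t).1
    (preconnected_and_dist_const hT t).2 a u c w).2

lemma dist_comp_cast {n n' : ℕ} (h : n = n') (u v : Fin n' → V) :
    (SierpinskiGraph T n).dist (u ∘ Fin.cast h) (v ∘ Fin.cast h) =
      (SierpinskiGraph T n').dist u v := by
  subst h
  rfl

theorem dist_eq_dist_suffix_of_prefix_eq (hT : T.IsTree) (s : ℕ) {n : ℕ}
    (w w' : Fin (s + n) → V)
    (hpre : ∀ i : Fin (s + n), (i : ℕ) < s → w i = w' i) :
    (SierpinskiGraph T (s + n)).dist w w' =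
      (SierpinskiGraph T n).dist (w ∘ Fin.natAdd s) (w' ∘ Fin.natAdd s) := by
  induction s with
  | zero =>
    have h : n = 0 + n := (zero_add n).symm
    have hcast : Fin.natAdd 0 = Fin.cast h := funext fun i => Fin.ext (by simp)
    rw [hcast, dist_comp_cast]
  | succ s ih =>
    have h : s + n + 1 = s + 1 + n := by omega
    have hsucc : Fin.cast h ∘ Fin.succ ∘ Fin.natAdd s = Fin.natAdd (s + 1) :=
      funext fun i => Fin.ext (by simp; omega)
    have hhead : (w ∘ Fin.cast h) 0 = (w' ∘ Fin.cast h) 0 := hpre _ (by simp)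
    rw [← dist_comp_cast h, ← Fin.cons_self_tail (w ∘ Fin.cast h),
      ← Fin.cons_self_tail (w' ∘ Fin.cast h), hhead, dist_cons_cons hT, distFormula_same,
      ih (Fin.tail (w ∘ Fin.cast h)) (Fin.tail (w' ∘ Fin.cast h))
        fun i hi => hpre _ (by simp; omega), ← hsucc]
    rfl

end SierpinskiGraph

open SierpinskiGraph in
/-- for a tree `T`, with `t = j + m` (`j, m ≥ 1`),
`w = z^{j-1} x x_{j+1} ⋯ x_t`, `w' = z^{j-1} y y_{j+1} ⋯ y_t`, `x ≠ y`:
`d_{S(T,t)}(w,w') = d_{S(T,m)}((x')^m, x_{j+1}⋯x_t) + d_{S(T,m)}((y')^m, y_{j+1}⋯y_t)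
  + (2^{m+1} − 1)·d_T(x,y) − 2(2^m − 1)`,
where `x'` and `y'` are the neighbours of `x` and `y` on the (unique) `x`–`y` path `q`
in `T` (the second and penultimate vertices of `q`). -/
theorem stmt_11 {V : Type*} (T : SimpleGraph V) (hT : T.IsTree)
    (j m : ℕ) (hj : 1 ≤ j)
    (x y z : V) (hxy : x ≠ y)
    (w w' : Fin (j + m) → V)
    (hpre : ∀ i : Fin (j + m), (i : ℕ) < j - 1 → w i = z ∧ w' i = z)
    (hwx : w ⟨j - 1, by omega⟩ = x) (hwy : w' ⟨j - 1, by omega⟩ = y)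
    (q : T.Walk x y) (hq : q.IsPath) :
    (SierpinskiGraph T (j + m)).dist w w' =
      (SierpinskiGraph T m).dist (fun _ => q.getVert 1)
          (fun i : Fin m => w (Fin.natAdd j i))
        + (SierpinskiGraph T m).dist (fun _ => q.getVert (q.length - 1))
            (fun i : Fin m => w' (Fin.natAdd j i))
        + (2 ^ (m + 1) - 1) * T.dist x y - 2 * (2 ^ m - 1) := by
  obtain ⟨s, rfl⟩ : ∃ s, j = s + 1 := ⟨j - 1, by omega⟩
  have h : s + (m + 1) = s + 1 + m := by omega
  have hsplit (v : Fin (s + 1 + m) → V) : v ∘ Fin.cast h ∘ Fin.natAdd s =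
      Fin.cons (v ⟨s + 1 - 1, by omega⟩) (fun i => v (Fin.natAdd (s + 1) i)) := by
    funext i
    cases i using Fin.cases with
    | zero => exact congrArg v (Fin.ext (by simp))
    | succ i => exact congrArg v (Fin.ext (by simp; omega))
  obtain ⟨k, hk⟩ : ∃ k, T.dist x y = k + 1 :=
    Nat.exists_eq_add_one.mpr (hT.connected.pos_dist_of_ne hxy)
  have hx' : q.getVert 1 = hT.towards x y := hT.snd_eq_towards hq
  have hy' : q.getVert (q.length - 1) = hT.towards y x :=
    q.snd_reverse.symm.trans (hT.snd_eq_towards hq.reverse)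
  have hprefix (i : Fin (s + (m + 1))) (hi : (i : ℕ) < s) :
      (w ∘ Fin.cast h) i = (w' ∘ Fin.cast h) i :=
    (hpre _ (by simpa using hi)).1.trans (hpre _ (by simpa using hi)).2.symm
  rw [hx', hy', ← dist_comp_cast h, dist_eq_dist_suffix_of_prefix_eq hT s _ _ hprefix,
    Function.comp_assoc, Function.comp_assoc, hsplit, hsplit, hwx, hwy, dist_cons_cons hT,
    distFormula_of_ne hxy, hk, Nat.add_sub_cancel, two_pow_succ_sub_one_mul_succ]
  omega
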